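/- arXiv:2208.01681 — 7 statements merged into one kernel-verified Lean document; each statement's English description precedes it below -/
import Mathlib

section
/- Let H be a real Hilbert space, z₁,…,z_{n_z}, g₁,…,g_{n_g} ∈ H with Gram matrices Z and G respectively, and A = [a_{kl}] ∈ ℝ^{n_z×n_g}. Then the finite-rank operator K̂ = Σ_{k=1}^{n_z} Σ_{l=1}^{n_g} a_{kl} z_k ⊗ g_l ∈ L(H) satisfies ‖K̂‖ = ‖Z^{1/2} A G^{1/2}‖, where the left-hand side is the operator norm on L(H) and the right-hand side is the spectral norm of the matrix Z^{1/2} A G^{1/2}. -/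
open scoped InnerProductSpace

/-- The rank-one operator `v ⊗ u : w ↦ ⟪u, w⟫ v` on a real Hilbert space. -/
noncomputable def rankOne {H : Type*} [NormedAddCommGroup H] [InnerProductSpace ℝ H]
    (v u : H) : H →L[ℝ] H := (innerSL ℝ u).smulRight v

/-- The Gram matrix of a finite family of vectors. -/
noncomputable def gram {H : Type*} [NormedAddCommGroup H] [InnerProductSpace ℝ H]
    {n : ℕ} (u : Fin n → H) : Matrix (Fin n) (Fin n) ℝ :=
  Matrix.of fun i j => ⟪u i, u j⟫_ℝ

/-- Spectral norm of a real matrix (the operator norm of the induced map between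
Euclidean spaces). -/
noncomputable def specNorm {n m : ℕ} (M : Matrix (Fin n) (Fin m) ℝ) : ℝ :=
  ‖LinearMap.toContinuousLinearMap (Matrix.toEuclideanLin M)‖

/-! Let `S_u v = ∑ i, vᵢ • uᵢ` be the synthesis map of a family `u` and `S_u* x = (⟪uᵢ, x⟫)ᵢ` its
analysis map, so that `K̂ = S_z ∘ A ∘ S_g*`. Since `‖S_u v‖² = ⟪v, Gram(u) v⟫ = ‖M v‖²` whenever
`Mᵀ M = Gram(u)`, a factor `S_z` on the left may be replaced by `Z^{1/2}`. Passing to adjoints turns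
`S_g*` on the right into `S_g` on the left, which is replaced by `G^{1/2}` in the same way. As `H`
need not be complete, `‖T‖ = ‖T*‖` is proved directly from the adjoint relation
`⟪T x, y⟫ = ⟪x, T* y⟫` rather than through `ContinuousLinearMap.adjoint`. -/

open scoped Matrix Matrix.Norms.L2Operator
open Matrix (toEuclideanLin)
open LinearMap (toContinuousLinearMap)

namespace ContinuousLinearMap

variable {E F : Type*} [NormedAddCommGroup E] [InnerProductSpace ℝ E]
  [NormedAddCommGroup F] [InnerProductSpace ℝ F]

theorem opNorm_le_of_inner_map_eq_inner {S : E →L[ℝ] F} {T : F →L[ℝ] E}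
    (h : ∀ x y, ⟪S x, y⟫_ℝ = ⟪x, T y⟫_ℝ) : ‖S‖ ≤ ‖T‖ := by
  refine S.opNorm_le_bound (norm_nonneg T) fun x => ?_
  have key : ‖S x‖ * ‖S x‖ ≤ ‖T‖ * ‖x‖ * ‖S x‖ :=
    calc ‖S x‖ * ‖S x‖ = ⟪x, T (S x)⟫_ℝ := by rw [← h, real_inner_self_eq_norm_mul_norm]
      _ ≤ ‖x‖ * ‖T (S x)‖ := real_inner_le_norm _ _
      _ ≤ ‖x‖ * (‖T‖ * ‖S x‖) := by gcongr; exact T.le_opNorm _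
      _ = ‖T‖ * ‖x‖ * ‖S x‖ := by ring
  rcases (norm_nonneg (S x)).eq_or_lt with hzero | hpos
  · rw [← hzero]; positivity
  · exact le_of_mul_le_mul_right key hpos

theorem opNorm_eq_of_inner_map_eq_inner {S : E →L[ℝ] F} {T : F →L[ℝ] E}
    (h : ∀ x y, ⟪S x, y⟫_ℝ = ⟪x, T y⟫_ℝ) : ‖S‖ = ‖T‖ :=
  le_antisymm (opNorm_le_of_inner_map_eq_inner h) <| opNorm_le_of_inner_map_eq_inner
    fun y x => by rw [real_inner_comm, ← h, real_inner_comm]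

end ContinuousLinearMap

namespace Matrix

variable {m n o : Type*} [Fintype m] [Fintype n] [Fintype o] [DecidableEq n] [DecidableEq o]

theorem inner_toEuclideanLin_left [DecidableEq m] (M : Matrix m n ℝ) (v : EuclideanSpace ℝ n)
    (w : EuclideanSpace ℝ m) : ⟪toEuclideanLin M v, w⟫_ℝ = ⟪v, toEuclideanLin Mᵀ w⟫_ℝ := by
  simp [EuclideanSpace.inner_eq_star_dotProduct, dotProduct_mulVec, mulVec_transpose,
    dotProduct_comm]

theorem toContinuousLinearMap_toEuclideanLin_mul (M : Matrix m n ℝ) (N : Matrix n o ℝ) :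
    toContinuousLinearMap (toEuclideanLin (M * N)) =
      toContinuousLinearMap (toEuclideanLin M) ∘L toContinuousLinearMap (toEuclideanLin N) := by
  ext; simp [mulVec_mulVec]

end Matrix

section SynthesisAnalysis

variable {H : Type*} [NormedAddCommGroup H] [InnerProductSpace ℝ H] {ι : Type*}

noncomputable def synthesis [Fintype ι] (u : ι → H) : EuclideanSpace ℝ ι →L[ℝ] H :=
  ∑ i, (EuclideanSpace.proj i).smulRight (u i)

noncomputable def analysis (u : ι → H) : H →L[ℝ] EuclideanSpace ℝ ι :=
  (EuclideanSpace.equiv ι ℝ).symm.toContinuousLinearMap ∘L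
    ContinuousLinearMap.pi fun i => innerSL ℝ (u i)

theorem synthesis_apply [Fintype ι] (u : ι → H) (v : EuclideanSpace ℝ ι) :
    synthesis u v = ∑ i, v i • u i := by
  simp [synthesis]

theorem analysis_apply (u : ι → H) (x : H) (i : ι) : analysis u x i = ⟪u i, x⟫_ℝ := rfl

theorem inner_analysis_left [Fintype ι] (u : ι → H) (x : H) (v : EuclideanSpace ℝ ι) :
    ⟪analysis u x, v⟫_ℝ = ⟪x, synthesis u v⟫_ℝ := by
  simp [PiLp.inner_apply, analysis_apply, synthesis_apply, inner_sum, real_inner_smul_right,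
    real_inner_comm, mul_comm]

theorem sum_smul_rankOne_eq_synthesis_comp {k l : ℕ} (z : Fin k → H) (g : Fin l → H)
    (A : Matrix (Fin k) (Fin l) ℝ) :
    ∑ i, ∑ j, A i j • rankOne (z i) (g j) =
      synthesis z ∘L toContinuousLinearMap (toEuclideanLin A) ∘L analysis g := by
  ext x
  simp [rankOne, synthesis_apply, analysis_apply, Matrix.mulVec, dotProduct, Finset.sum_smul,
    smul_smul]

theorem inner_synthesis_synthesis {k : ℕ} (u : Fin k → H) (v w : EuclideanSpace ℝ (Fin k)) :
    ⟪synthesis u v, synthesis u w⟫_ℝ = ⟪v, toEuclideanLin (gram u) w⟫_ℝ := by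
  simp only [synthesis_apply, inner_sum, sum_inner, real_inner_smul_left, real_inner_smul_right,
    PiLp.inner_apply, RCLike.inner_apply, conj_trivial, Matrix.ofLp_toLpLin, Matrix.toLin'_apply,
    Matrix.mulVec, dotProduct, gram, Matrix.of_apply, Finset.sum_mul]
  rw [Finset.sum_comm]
  refine Finset.sum_congr rfl fun i _ => Finset.sum_congr rfl fun j _ => ?_
  ring

theorem norm_synthesis_apply {k l : ℕ} (u : Fin k → H) {M : Matrix (Fin l) (Fin k) ℝ}
    (hM : Mᵀ * M = gram u) (v : EuclideanSpace ℝ (Fin k)) :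
    ‖synthesis u v‖ = ‖toEuclideanLin M v‖ := by
  rw [← sq_eq_sq₀ (norm_nonneg _) (norm_nonneg _), ← real_inner_self_eq_norm_sq,
    ← real_inner_self_eq_norm_sq, inner_synthesis_synthesis, Matrix.inner_toEuclideanLin_left,
    ← hM]
  simp

theorem opNorm_synthesis_comp {E : Type*} [NormedAddCommGroup E] [NormedSpace ℝ E] {k l : ℕ}
    (u : Fin k → H) {M : Matrix (Fin l) (Fin k) ℝ} (hM : Mᵀ * M = gram u)
    (T : E →L[ℝ] EuclideanSpace ℝ (Fin k)) :
    ‖synthesis u ∘L T‖ = ‖toContinuousLinearMap (toEuclideanLin M) ∘L T‖ :=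
  ContinuousLinearMap.opNorm_ext _ _ fun x => norm_synthesis_apply u hM (T x)

theorem opNorm_comp_analysis {k l p : ℕ} (u : Fin k → H) {M : Matrix (Fin l) (Fin k) ℝ}
    (hM : Mᵀ * M = gram u) (N : Matrix (Fin p) (Fin k) ℝ) :
    ‖toContinuousLinearMap (toEuclideanLin N) ∘L analysis u‖ = ‖N * Mᵀ‖ :=
  calc _ = ‖synthesis u ∘L toContinuousLinearMap (toEuclideanLin Nᵀ)‖ :=
        ContinuousLinearMap.opNorm_eq_of_inner_map_eq_inner fun x v => by
          simp [Matrix.inner_toEuclideanLin_left, inner_analysis_left]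
    _ = ‖M * Nᵀ‖ := by
        rw [opNorm_synthesis_comp u hM, ← Matrix.toContinuousLinearMap_toEuclideanLin_mul]; rfl
    _ = ‖N * Mᵀ‖ := by
        rw [← Matrix.l2_opNorm_conjTranspose, Matrix.conjTranspose_eq_transpose_of_trivial,
          Matrix.transpose_mul, Matrix.transpose_transpose]

end SynthesisAnalysis

/-- The operator norm of the finite-rank operator `K̂ = Σ_{k,l} a_{kl} z_k ⊗ g_l`
equals the spectral norm of the matrix `Z^{1/2} A G^{1/2}`, where `Zh = Z^{1/2}`
and `Gh = G^{1/2}` are the PSD square roots of the Gram matrices of `(z_k)` and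
`(g_l)`. -/
theorem statement1 {H : Type*} [NormedAddCommGroup H] [InnerProductSpace ℝ H]
    {nz ng : ℕ} (z : Fin nz → H) (g : Fin ng → H)
    (A : Matrix (Fin nz) (Fin ng) ℝ)
    (Zh : Matrix (Fin nz) (Fin nz) ℝ) (hZh : Zh.PosSemidef) (hZh2 : Zh * Zh = gram z)
    (Gh : Matrix (Fin ng) (Fin ng) ℝ) (hGh : Gh.PosSemidef) (hGh2 : Gh * Gh = gram g) :
    ‖∑ k, ∑ l, A k l • rankOne (z k) (g l)‖ = specNorm (Zh * A * Gh) := by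
  have hZsymm : Zhᵀ = Zh := (Matrix.isHermitian_iff_isSymm.1 hZh.1).eq
  have hGsymm : Ghᵀ = Gh := (Matrix.isHermitian_iff_isSymm.1 hGh.1).eq
  have hZ : Zhᵀ * Zh = gram z := by rw [hZsymm, hZh2]
  have hG : Ghᵀ * Gh = gram g := by rw [hGsymm, hGh2]
  calc ‖∑ k, ∑ l, A k l • rankOne (z k) (g l)‖
      = ‖synthesis z ∘L toContinuousLinearMap (toEuclideanLin A) ∘L analysis g‖ := by
        rw [sum_smul_rankOne_eq_synthesis_comp]
    _ = ‖toContinuousLinearMap (toEuclideanLin (Zh * A)) ∘L analysis g‖ := by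
        rw [opNorm_synthesis_comp z hZ, Matrix.toContinuousLinearMap_toEuclideanLin_mul,
          ContinuousLinearMap.comp_assoc]
    _ = ‖Zh * A * Ghᵀ‖ := opNorm_comp_analysis g hG _
    _ = specNorm (Zh * A * Gh) := by rw [hGsymm]; rfl
end

section
/- Let H be a real Hilbert space, v₁,…,v_{n_s}, g₁,…,g_{n_g} ∈ H, 𝒢 = span{g₁,…,g_{n_g}}, and W a closed linear subspace of H with orthogonal projection Π_W. Let L_W = {S ∈ L(H) : S(𝒢) ⊆ W}. For any A = [a_{kl}] ∈ ℝ^{n_s×n_g}, set K̂ = Σ_{k,l} a_{kl} v_k ⊗ g_l and K̃_W = Σ_{k,l} a_{kl} (Π_W v_k) ⊗ g_l. Then K̃_W ∈ L_W and ‖K̂ − K̃_W‖ ≤ ‖K̂ − S‖ for every S ∈ L_W; that is, K̃_W is a minimizer of S ↦ ‖K̂ − S‖ over L_W. -/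
open scoped InnerProductSpace

/-!
Both `K̂` and `K̃_W` only see the component of their argument in `𝒢`, and `K̃_W = Π_W K̂`.
So for `S ∈ L_W` and `y = Π_𝒢 x`, the best-approximation property of `Π_W` gives
`‖(K̂ - K̃_W) x‖ = ‖K̂ y - Π_W K̂ y‖ ≤ ‖K̂ y - S y‖ ≤ ‖K̂ - S‖ ‖y‖ ≤ ‖K̂ - S‖ ‖x‖`.
-/

section BestApproximation

variable {𝕜 E F : Type*} [RCLike 𝕜] [NormedAddCommGroup E] [InnerProductSpace 𝕜 E]
  [NormedAddCommGroup F] [InnerProductSpace 𝕜 F]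

theorem Submodule.norm_sub_starProjection_le_norm_sub (W : Submodule 𝕜 F)
    [W.HasOrthogonalProjection] (y : F) {w : F} (hw : w ∈ W) :
    ‖y - W.starProjection y‖ ≤ ‖y - w‖ := by
  rw [W.starProjection_minimal]
  exact ciInf_le ⟨0, by rintro _ ⟨z, rfl⟩; positivity⟩ (⟨w, hw⟩ : W)

theorem ContinuousLinearMap.norm_sub_starProjection_comp_le {G : Submodule 𝕜 E}
    [G.HasOrthogonalProjection] {W : Submodule 𝕜 F} [W.HasOrthogonalProjection]
    {K S : E →L[𝕜] F} (hK : K ∘L G.starProjection = K) (hS : ∀ x ∈ G, S x ∈ W) :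
    ‖K - W.starProjection ∘L K‖ ≤ ‖K - S‖ := by
  refine (K - W.starProjection ∘L K).opNorm_le_bound (norm_nonneg _) fun x => ?_
  set y := G.starProjection x
  have hKy : K y = K x := DFunLike.congr_fun hK x
  calc ‖(K - W.starProjection ∘L K) x‖ = ‖K y - W.starProjection (K y)‖ := by simp [hKy]
    _ ≤ ‖K y - S y‖ :=
      W.norm_sub_starProjection_le_norm_sub _ (hS y (G.starProjection_apply_mem x))
    _ = ‖(K - S) y‖ := rfl
    _ ≤ ‖K - S‖ * ‖y‖ := (K - S).le_opNorm y
    _ ≤ ‖K - S‖ * ‖x‖ := by gcongr; exact G.norm_starProjection_apply_le x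

end BestApproximation

section RankOne

variable {H : Type*} [NormedAddCommGroup H] [InnerProductSpace ℝ H]

theorem ContinuousLinearMap.comp_rankOne (T : H →L[ℝ] H) (v u : H) :
    T ∘L rankOne v u = rankOne (T v) u := by
  ext x
  simp [rankOne]

theorem rankOne_comp_starProjection {G : Submodule ℝ H} [G.HasOrthogonalProjection]
    (v : H) {u : H} (hu : u ∈ G) : rankOne v u ∘L G.starProjection = rankOne v u := by
  ext x
  simp [rankOne, ← G.inner_starProjection_left_eq_right, G.starProjection_eq_self_iff.mpr hu]

variable {ι κ : Type*} [Fintype ι] [Fintype κ]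

theorem ContinuousLinearMap.comp_sum_smul_rankOne (T : H →L[ℝ] H) (A : Matrix ι κ ℝ)
    (v : ι → H) (g : κ → H) :
    T ∘L (∑ k, ∑ l, A k l • rankOne (v k) (g l)) =
      ∑ k, ∑ l, A k l • rankOne (T (v k)) (g l) := by
  simp only [ContinuousLinearMap.comp_finsetSum, ContinuousLinearMap.comp_smul,
    ContinuousLinearMap.comp_rankOne]

theorem sum_smul_rankOne_comp_starProjection {G : Submodule ℝ H} [G.HasOrthogonalProjection]
    (A : Matrix ι κ ℝ) (v : ι → H) {g : κ → H} (hg : ∀ l, g l ∈ G) :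
    (∑ k, ∑ l, A k l • rankOne (v k) (g l)) ∘L G.starProjection =
      ∑ k, ∑ l, A k l • rankOne (v k) (g l) := by
  simp only [ContinuousLinearMap.finsetSum_comp, ContinuousLinearMap.smul_comp,
    rankOne_comp_starProjection _ (hg _)]

end RankOne

theorem statement2_general {H : Type*} [NormedAddCommGroup H] [InnerProductSpace ℝ H]
    {ns ng : ℕ} (v : Fin ns → H) (g : Fin ng → H)
    (W : Submodule ℝ H) [W.HasOrthogonalProjection]
    (A : Matrix (Fin ns) (Fin ng) ℝ) :
    (∑ k, ∑ l, A k l • rankOne ((W.orthogonalProjectionOnto (v k) : H)) (g l)) ∈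
      {S : H →L[ℝ] H | ∀ x ∈ Submodule.span ℝ (Set.range g), S x ∈ W} ∧
    ∀ S ∈ {S : H →L[ℝ] H | ∀ x ∈ Submodule.span ℝ (Set.range g), S x ∈ W},
      ‖(∑ k, ∑ l, A k l • rankOne (v k) (g l)) -
          ∑ k, ∑ l, A k l • rankOne ((W.orthogonalProjectionOnto (v k) : H)) (g l)‖ ≤
      ‖(∑ k, ∑ l, A k l • rankOne (v k) (g l)) - S‖ := by
  have : FiniteDimensional ℝ (Submodule.span ℝ (Set.range g)) :=
    FiniteDimensional.span_of_finite ℝ (Set.finite_range g)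
  simp only [Submodule.coe_orthogonalProjectionOnto_apply,
    ← W.starProjection.comp_sum_smul_rankOne]
  refine ⟨fun x _ => W.starProjection_apply_mem _, fun S hS => ?_⟩
  exact ContinuousLinearMap.norm_sub_starProjection_comp_le
    (sum_smul_rankOne_comp_starProjection A v fun l =>
      Submodule.subset_span (Set.mem_range_self l)) hS

/-- `K̃_W = Σ_{k,l} a_{kl} (Π_W v_k) ⊗ g_l` belongs to
`L_W = {S ∈ L(H) : S(span{g_l}) ⊆ W}` and minimizes `S ↦ ‖K̂ − S‖` over `L_W`,
where `K̂ = Σ_{k,l} a_{kl} v_k ⊗ g_l`. -/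
theorem statement2 {H : Type*} [NormedAddCommGroup H] [InnerProductSpace ℝ H]
    [CompleteSpace H] {ns ng : ℕ} (v : Fin ns → H) (g : Fin ng → H)
    (W : Submodule ℝ H) [W.HasOrthogonalProjection]
    (A : Matrix (Fin ns) (Fin ng) ℝ) :
    (∑ k, ∑ l, A k l • rankOne ((W.orthogonalProjectionOnto (v k) : H)) (g l)) ∈
      {S : H →L[ℝ] H | ∀ x ∈ Submodule.span ℝ (Set.range g), S x ∈ W} ∧
    ∀ S ∈ {S : H →L[ℝ] H | ∀ x ∈ Submodule.span ℝ (Set.range g), S x ∈ W},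
      ‖(∑ k, ∑ l, A k l • rankOne (v k) (g l)) -
          ∑ k, ∑ l, A k l • rankOne ((W.orthogonalProjectionOnto (v k) : H)) (g l)‖ ≤
      ‖(∑ k, ∑ l, A k l • rankOne (v k) (g l)) - S‖ :=
  statement2_general v g W A
end

section
/- Let H be a real Hilbert space, v₁,…,v_{n_s} ∈ H, and g₁,…,g_{n_g} ∈ H linearly independent with Gram matrix G (invertible), 𝒢 = span{g₁,…,g_{n_g}}, L_𝒢 = {S ∈ L(H) : S(𝒢) ⊆ 𝒢}. Let P_𝒢 ∈ ℝ^{n_s×n_g} have entries [P_𝒢]_{kl} = ⟨v_k, g_l⟩ and assume P_𝒢 has full column rank n_g. Let Y ∈ ℝ^{n_s×n_g}, M* = (P_𝒢ᵀP_𝒢)^{-1}P_𝒢ᵀY, C_{M*} = M* G^{-1}, and define K̂_U = Σ_{j=1}^{n_g} Σ_{l=1}^{n_g} [C_{M*}]_{jl} g_j ⊗ g_l. Then: (i) K̂_U is a solution of min_{K ∈ L_𝒢} E(K), where E(K) = Σ_{k,l}(y_{kl} − ⟨v_k, K g_l⟩)²; and (ii) K̂_U g_l = Σ_{j=1}^{n_g}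 [M*]_{jl} g_j for each l, i.e., the restriction of K̂_U to 𝒢 coincides with the EDMD map U defined by U g_l = Σ_j [M*]_{jl} g_j. -/
open scoped InnerProductSpace Matrix

/-- Least squares: if the normal equations hold for `A`, then `A` minimizes
`∑ (Y - P·M)²` over matrices `M`. -/
lemma lsq_min {ns ng : ℕ} (P Y : Matrix (Fin ns) (Fin ng) ℝ)
    (A B : Matrix (Fin ng) (Fin ng) ℝ) (h : Pᵀ * (Y - P * A) = 0) :
    (∑ k, ∑ l, (Y k l - (P * A) k l) ^ 2) ≤ ∑ k, ∑ l, (Y k l - (P * B) k l) ^ 2 := by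
  set R : Matrix (Fin ns) (Fin ng) ℝ := Y - P * A with hR
  set D : Matrix (Fin ns) (Fin ng) ℝ := P * (A - B) with hD
  have cross : ∑ k, ∑ l, R k l * D k l = 0 := by
    have tr_eq : ∑ k, ∑ l, R k l * D k l = Matrix.trace (Rᵀ * D) := by
      rw [Matrix.trace]
      simp only [Matrix.diag, Matrix.mul_apply, Matrix.transpose_apply]
      rw [Finset.sum_comm]
    have : Rᵀ * D = 0 := by
      rw [hD, ← Matrix.mul_assoc, ← Matrix.transpose_transpose (Rᵀ * P),
        Matrix.transpose_mul, Matrix.transpose_transpose, h]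
      simp
    rw [tr_eq, this, Matrix.trace_zero]
  have expand : ∀ k l, (Y k l - (P * B) k l) ^ 2
      = R k l ^ 2 + 2 * (R k l * D k l) + D k l ^ 2 := by
    intro k l
    have : Y k l - (P * B) k l = R k l + D k l := by
      simp [hR, hD, Matrix.mul_sub, Matrix.sub_apply]
    rw [this]; ring
  calc ∑ k, ∑ l, (Y k l - (P * A) k l) ^ 2
      = ∑ k, ∑ l, R k l ^ 2 := by simp [hR]
    _ ≤ ∑ k, ∑ l, R k l ^ 2 + (2 * ∑ k, ∑ l, R k l * D k l + ∑ k, ∑ l, D k l ^ 2) := by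
        rw [cross]
        have : (0:ℝ) ≤ ∑ k, ∑ l, D k l ^ 2 :=
          Finset.sum_nonneg fun k _ => Finset.sum_nonneg fun l _ => sq_nonneg _
        linarith
    _ = ∑ k, ∑ l, (Y k l - (P * B) k l) ^ 2 := by
        simp only [expand, Finset.sum_add_distrib, Finset.mul_sum]
        ring

/-- **EDMD as unregularized operator-theoretic learning.**  With `g₁,…,g_{n_g}`
linearly independent (so that `G = gram g` is invertible), `[P_𝒢]_{kl} = ⟪v_k, g_l⟫`
of full column rank, `M* = (P_𝒢ᵀP_𝒢)⁻¹P_𝒢ᵀY` and `C_{M*} = M* G⁻¹`, the operator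
`K̂_U = Σ_{j,l} [C_{M*}]_{jl} g_j ⊗ g_l` is a solution of `min_{K ∈ L_𝒢} E(K)`,
and its restriction to `𝒢` coincides with the EDMD map: `K̂_U g_l = Σ_j [M*]_{jl} g_j`. -/
theorem statement6 {H : Type*} [NormedAddCommGroup H] [InnerProductSpace ℝ H]
    [CompleteSpace H] {ns ng : ℕ} (v : Fin ns → H) (g : Fin ng → H)
    (hg : LinearIndependent ℝ g) (hG : IsUnit (gram g).det)
    (P : Matrix (Fin ns) (Fin ng) ℝ) (hP : ∀ k l, P k l = ⟪v k, g l⟫_ℝ)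
    (hPrank : P.rank = ng)
    (Y : Matrix (Fin ns) (Fin ng) ℝ)
    (Mstar : Matrix (Fin ng) (Fin ng) ℝ) (hMstar : Mstar = (Pᵀ * P)⁻¹ * Pᵀ * Y)
    (KhatU : H →L[ℝ] H)
    (hKhatU : KhatU = ∑ j, ∑ l, (Mstar * (gram g)⁻¹) j l • rankOne (g j) (g l)) :
    -- (i) `K̂_U` solves `min_{K ∈ L_𝒢} E(K)`
    (KhatU ∈ {S : H →L[ℝ] H | ∀ x ∈ Submodule.span ℝ (Set.range g),
        S x ∈ Submodule.span ℝ (Set.range g)} ∧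
      ∀ K ∈ {S : H →L[ℝ] H | ∀ x ∈ Submodule.span ℝ (Set.range g),
          S x ∈ Submodule.span ℝ (Set.range g)},
        (∑ k, ∑ l, (Y k l - ⟪v k, KhatU (g l)⟫_ℝ) ^ 2) ≤
        (∑ k, ∑ l, (Y k l - ⟪v k, K (g l)⟫_ℝ) ^ 2)) ∧
    (∀ l, KhatU (g l) = ∑ j, Mstar j l • g j) := by
  -- `PᵀP` is invertible
  have hrank : (Pᵀ * P).rank = ng := by
    rw [Matrix.rank_transpose_mul_self, hPrank]
  have hQdet : IsUnit (Pᵀ * P).det := by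
    have hsurj : Function.Surjective (Pᵀ * P).mulVec := by
      have htop : LinearMap.range (Pᵀ * P).mulVecLin = ⊤ := by
        apply Submodule.eq_top_of_finrank_eq
        have : Module.finrank ℝ (Fin ng → ℝ) = ng := by simp
        rw [this]
        exact hrank
      intro y
      obtain ⟨x, hx⟩ := LinearMap.range_eq_top.mp htop y
      exact ⟨x, by rwa [Matrix.mulVecLin_apply] at hx⟩
    exact (Matrix.isUnit_iff_isUnit_det _).mp (Matrix.mulVec_surjective_iff_isUnit.mp hsurj)
  -- the normal equations
  have hnormal : Pᵀ * (Y - P * Mstar) = 0 := by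
    have key : Pᵀ * (P * Mstar) = Pᵀ * Y := by
      simp only [hMstar, ← Matrix.mul_assoc, Matrix.mul_nonsing_inv _ hQdet, Matrix.one_mul]
    rw [Matrix.mul_sub, key, sub_self]
  -- part (ii)
  have hii : ∀ l, KhatU (g l) = ∑ j, Mstar j l • g j := by
    intro m
    rw [hKhatU]
    simp only [ContinuousLinearMap.sum_apply, ContinuousLinearMap.coe_smul',
      Pi.smul_apply, rankOne, ContinuousLinearMap.smulRight_apply, innerSL_apply_apply]
    have hrow : ∀ j, ∑ l, (Mstar * (gram g)⁻¹) j l • (⟪g l, g m⟫_ℝ • g j)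
        = ((Mstar * (gram g)⁻¹ * gram g) j m) • g j := by
      intro j
      rw [Matrix.mul_apply, Finset.sum_smul]
      refine Finset.sum_congr rfl fun l _ => ?_
      rw [smul_smul]
      rfl
    calc ∑ j, ∑ l, (Mstar * (gram g)⁻¹) j l • (⟪g l, g m⟫_ℝ • g j)
        = ∑ j, ((Mstar * (gram g)⁻¹ * gram g) j m) • g j := by
          exact Finset.sum_congr rfl fun j _ => hrow j
      _ = ∑ j, Mstar j m • g j := by
          rw [Matrix.mul_assoc, Matrix.nonsing_inv_mul _ hG, Matrix.mul_one]
  -- membership of `KhatU` in `L_𝒢`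
  have hmem : ∀ x ∈ Submodule.span ℝ (Set.range g),
      KhatU x ∈ Submodule.span ℝ (Set.range g) := by
    intro x _
    rw [hKhatU]
    simp only [ContinuousLinearMap.sum_apply, ContinuousLinearMap.coe_smul',
      Pi.smul_apply, rankOne, ContinuousLinearMap.smulRight_apply, innerSL_apply_apply]
    refine Submodule.sum_mem _ fun j _ => Submodule.sum_mem _ fun l _ => ?_
    exact Submodule.smul_mem _ _ (Submodule.smul_mem _ _
      (Submodule.subset_span ⟨j, rfl⟩))
  -- inner products with `KhatU`
  have hinner : ∀ k l, ⟪v k, KhatU (g l)⟫_ℝ = (P * Mstar) k l := by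
    intro k l
    rw [hii l, inner_sum, Matrix.mul_apply]
    refine Finset.sum_congr rfl fun j _ => ?_
    rw [real_inner_smul_right, hP, mul_comm]
  refine ⟨⟨hmem, ?_⟩, hii⟩
  intro K hK
  -- write K (g l) in coordinates
  have hKg : ∀ l, K (g l) ∈ Submodule.span ℝ (Set.range g) :=
    fun l => hK (g l) (Submodule.subset_span ⟨l, rfl⟩)
  choose c hc using fun l => (Submodule.mem_span_range_iff_exists_fun ℝ).mp (hKg l)
  set cM : Matrix (Fin ng) (Fin ng) ℝ := Matrix.of fun j l => c l j with hcM
  have hinnerK : ∀ k l, ⟪v k, K (g l)⟫_ℝ = (P * cM) k l := by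
    intro k l
    rw [← hc l, inner_sum, Matrix.mul_apply]
    refine Finset.sum_congr rfl fun j _ => ?_
    rw [real_inner_smul_right, hP, mul_comm]
    rfl
  simp only [hinner, hinnerK]
  exact lsq_min P Y Mstar cM hnormal
end

section
/- Under the setting of the EDMD theorem (g₁,…,g_{n_g} linearly independent, P_𝒢 = [⟨v_k, g_l⟩] of full column rank, G invertible, K̂_U = Σ_{j,l}[M* G^{-1}]_{jl} g_j ⊗ g_l with M* = (P_𝒢ᵀP_𝒢)^{-1}P_𝒢ᵀY), for each λ > 0 let K̂_{𝒢,λ} be the unique solution of min_{K ∈ L_𝒢} E(K) + λ‖K‖². Then K̂_{𝒢,λ} converges to K̂_U in the operator norm as λ → 0⁺, and K̂_{𝒢,λ} converges to the zero operator in the operator norm as λ → ∞. -/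
open scoped InnerProductSpace Matrix Topology

/-!
The minimizer `K λ` vanishes on `𝒢ᗮ`: composing it with the orthogonal projection onto `𝒢`
keeps the data term and does not increase the norm, so by uniqueness it changes nothing.
Hence `K λ = Σ_{j,m} (C λ)_{jm} g_j ⊗ g_m` for a coefficient matrix `C λ`, and the data term of
such an operator is the least-squares functional `‖Y - P B‖²` of `B = C G`. Since `M*` solves
the normal equations, `‖Y - P B‖² = ‖Y - P M*‖² + ‖P (B - M*)‖²`, and comparing `K λ` with
`K̂_U` gives `‖P (B λ - M*)‖² ≤ λ ‖K̂_U‖²`. As `P` has a left inverse, `B λ → M*`, and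
`C ↦ Σ C_{jm} g_j ⊗ g_m` is continuous. For `λ → ∞`, comparing with `0` gives
`λ ‖K λ‖² ≤ E(0)`.
-/

open Filter Set Submodule

namespace Matrix

variable {m n p : Type*} [Fintype m] [Fintype n]

lemma sum_sum_sq_eq_trace (A : Matrix m n ℝ) : ∑ k, ∑ l, A k l ^ 2 = (Aᵀ * A).trace := by
  simp only [trace, diag, mul_apply, transpose_apply, sq]
  exact Finset.sum_comm

lemma isUnit_det_transpose_mul_self [DecidableEq n] (P : Matrix m n ℝ)
    (h : P.rank = Fintype.card n) : IsUnit (Pᵀ * P).det := by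
  rw [← isUnit_iff_isUnit_det, ← mulVec_surjective_iff_isUnit, ← coe_mulVecLin,
    ← LinearMap.range_eq_top]
  apply Submodule.eq_top_of_finrank_eq
  rw [Module.finrank_fintype_fun_eq_card]
  exact (rank_transpose_mul_self P).trans h

lemma transpose_mul_sub_mul_nonsing_inv_mul_eq_zero [DecidableEq n] {P : Matrix m n ℝ}
    (hP : IsUnit (Pᵀ * P).det) (Y : Matrix m p ℝ) :
    Pᵀ * (Y - P * ((Pᵀ * P)⁻¹ * Pᵀ * Y)) = 0 := by
  rw [Matrix.mul_sub, ← Matrix.mul_assoc, ← Matrix.mul_assoc, ← Matrix.mul_assoc,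
    mul_nonsing_inv _ hP, Matrix.one_mul, sub_self]

variable [Fintype p]

lemma sum_sum_sq_sub_mul_eq {P : Matrix m n ℝ} {Y : Matrix m p ℝ} {M : Matrix n p ℝ}
    (hM : Pᵀ * (Y - P * M) = 0) (B : Matrix n p ℝ) :
    ∑ k, ∑ l, (Y - P * B) k l ^ 2 =
      ∑ k, ∑ l, (Y - P * M) k l ^ 2 + ∑ k, ∑ l, (P * (B - M)) k l ^ 2 := by
  have hY : Y - P * B = (Y - P * M) - P * (B - M) := by rw [Matrix.mul_sub]; abel
  have hRD : (Y - P * M)ᵀ * (P * (B - M)) = 0 := by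
    rw [← Matrix.mul_assoc, ← transpose_transpose ((Y - P * M)ᵀ * P), transpose_mul,
      transpose_transpose, hM, transpose_zero, Matrix.zero_mul]
  have hDR : (P * (B - M))ᵀ * (Y - P * M) = 0 := by
    rw [transpose_mul, Matrix.mul_assoc, hM, Matrix.mul_zero]
  rw [sum_sum_sq_eq_trace, sum_sum_sq_eq_trace, sum_sum_sq_eq_trace, ← trace_add, hY]
  generalize Y - P * M = R at hRD hDR
  generalize P * (B - M) = D at hRD hDR
  rw [transpose_sub, Matrix.sub_mul, Matrix.mul_sub, Matrix.mul_sub, hRD, hDR]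
  abel_nf

lemma tendsto_nhdsGT_zero_of_sum_sum_sq_le {A : ℝ → Matrix m n ℝ} {c : ℝ}
    (h : ∀ x > 0, ∑ k, ∑ l, A x k l ^ 2 ≤ x * c) : Tendsto A (𝓝[>] 0) (𝓝 0) := by
  refine tendsto_pi_nhds.2 fun k => tendsto_pi_nhds.2 fun l => ?_
  show Tendsto (fun x => A x k l) _ (𝓝 0)
  rw [tendsto_zero_iff_norm_tendsto_zero]
  have hsqrt : Tendsto (fun x : ℝ => √(x * c)) (𝓝[>] 0) (𝓝 0) := by
    simpa using ((continuous_id.mul continuous_const).sqrt.tendsto (0 : ℝ)).mono_left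
      nhdsWithin_le_nhds
  refine squeeze_zero' (Eventually.of_forall fun x => norm_nonneg _) ?_ hsqrt
  filter_upwards [self_mem_nhdsWithin] with x hx
  refine Real.abs_le_sqrt ((h x hx).trans' ?_)
  calc A x k l ^ 2 ≤ ∑ l', A x k l' ^ 2 :=
        Finset.single_le_sum (fun _ _ => sq_nonneg _) (Finset.mem_univ l)
    _ ≤ ∑ k', ∑ l', A x k' l' ^ 2 :=
        Finset.single_le_sum (f := fun k' => ∑ l', A x k' l' ^ 2)
          (fun _ _ => Finset.sum_nonneg fun _ _ => sq_nonneg _) (Finset.mem_univ k)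

lemma tendsto_nhdsGT_zero_of_sum_sum_sq_mul_sub_le [DecidableEq n] {P : Matrix m n ℝ}
    (hP : IsUnit (Pᵀ * P).det) {B : ℝ → Matrix n p ℝ} {M : Matrix n p ℝ} {c : ℝ}
    (h : ∀ x > 0, ∑ k, ∑ l, (P * (B x - M)) k l ^ 2 ≤ x * c) :
    Tendsto B (𝓝[>] 0) (𝓝 M) := by
  have hleft : (Pᵀ * P)⁻¹ * Pᵀ * P = 1 := by
    rw [Matrix.mul_assoc, nonsing_inv_mul _ hP]
  have hPB := ((continuous_const (y := (Pᵀ * P)⁻¹ * Pᵀ)).matrix_mul continuous_id).tendsto 0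
    |>.comp (tendsto_nhdsGT_zero_of_sum_sum_sq_le h)
  rw [← tendsto_sub_nhds_zero_iff]
  simpa [Function.comp_def, ← Matrix.mul_assoc, hleft] using hPB

end Matrix

lemma tendsto_atTop_zero_of_mul_norm_sq_le {E : Type*} [SeminormedAddCommGroup E] {f : ℝ → E}
    {c : ℝ} (h : ∀ x > 0, x * ‖f x‖ ^ 2 ≤ c) : Tendsto f atTop (𝓝 0) := by
  rw [tendsto_zero_iff_norm_tendsto_zero]
  refine squeeze_zero' (Eventually.of_forall fun x => norm_nonneg _) ?_
    (by simpa using (tendsto_const_nhds (x := c).div_atTop tendsto_id).sqrt)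
  filter_upwards [eventually_gt_atTop 0] with x hx
  exact Real.le_sqrt_of_sq_le ((le_div_iff₀' hx).2 (h x hx))

section Operators

variable {H : Type*} [NormedAddCommGroup H] [InnerProductSpace ℝ H]

instance finiteDimensional_span_range {ι : Type*} [Finite ι] (g : ι → H) :
    FiniteDimensional ℝ (span ℝ (range g)) :=
  FiniteDimensional.span_of_finite ℝ (finite_range g)

lemma ContinuousLinearMap.eq_of_eqOn_of_comp_starProjection {s : Set H}
    [(span ℝ s).HasOrthogonalProjection] {S T : H →L[ℝ] H}
    (hS : S ∘L (span ℝ s).starProjection = S) (hT : T ∘L (span ℝ s).starProjection = T)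
    (h : EqOn S T s) : S = T := by
  rw [← hS, ← hT]
  ext x
  exact LinearMap.eqOn_span' (f := (S : H →ₗ[ℝ] H)) (g := T) h
    ((span ℝ s).starProjection_apply_mem x)

lemma ContinuousLinearMap.norm_comp_starProjection_le (K : Submodule ℝ H)
    [K.HasOrthogonalProjection] (S : H →L[ℝ] H) : ‖S ∘L K.starProjection‖ ≤ ‖S‖ :=
  (S.opNorm_comp_le _).trans (mul_le_of_le_one_right (norm_nonneg S) K.starProjection_norm_le)

lemma ContinuousLinearMap.comp_starProjection_apply_mem {K : Submodule ℝ H}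
    [K.HasOrthogonalProjection] {S : H →L[ℝ] H} (hS : ∀ x ∈ K, S x ∈ K) (x : H) (hx : x ∈ K) :
    (S ∘L K.starProjection) x ∈ K := by
  simpa [starProjection_eq_self_iff.mpr hx] using hS x hx

variable {n : ℕ} (g : Fin n → H)

noncomputable def rankOneSum (C : Matrix (Fin n) (Fin n) ℝ) : H →L[ℝ] H :=
  ∑ j, ∑ m, C j m • rankOne (g j) (g m)

lemma rankOneSum_apply (C : Matrix (Fin n) (Fin n) ℝ) (x : H) :
    rankOneSum g C x = ∑ j, (C *ᵥ fun m => ⟪g m, x⟫_ℝ) j • g j := by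
  simp only [rankOneSum, rankOne, FunLike.coe_sum, Finset.sum_apply, FunLike.coe_smul,
    Pi.smul_apply, ContinuousLinearMap.smulRight_apply, innerSL_apply_apply, Matrix.mulVec,
    dotProduct, Finset.sum_smul, smul_smul]

lemma rankOneSum_apply_mem (C : Matrix (Fin n) (Fin n) ℝ) (x : H) :
    rankOneSum g C x ∈ span ℝ (range g) := by
  rw [rankOneSum_apply]
  exact sum_mem fun j _ => smul_mem _ _ (subset_span (mem_range_self j))

lemma rankOneSum_apply_self (C : Matrix (Fin n) (Fin n) ℝ) (l : Fin n) :
    rankOneSum g C (g l) = ∑ j, (C * gram g) j l • g j := by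
  rw [rankOneSum_apply]
  rfl

lemma rankOneSum_comp_starProjection (C : Matrix (Fin n) (Fin n) ℝ) :
    rankOneSum g C ∘L (span ℝ (range g)).starProjection = rankOneSum g C := by
  ext x
  simp only [ContinuousLinearMap.comp_apply, rankOneSum_apply]
  congr! 4
  rw [← inner_starProjection_left_eq_right,
    starProjection_eq_self_iff.mpr (subset_span (mem_range_self _))]

lemma continuous_rankOneSum : Continuous (rankOneSum g) := by
  unfold rankOneSum
  fun_prop

lemma exists_eq_rankOneSum (hG : IsUnit (gram g).det) {T : H →L[ℝ] H}
    (hT : ∀ l, T (g l) ∈ span ℝ (range g))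
    (hTP : T ∘L (span ℝ (range g)).starProjection = T) : ∃ C, T = rankOneSum g C := by
  choose b hb using fun l => (mem_span_range_iff_exists_fun ℝ).1 (hT l)
  refine ⟨Matrix.of (fun j l => b l j) * (gram g)⁻¹,
    ContinuousLinearMap.eq_of_eqOn_of_comp_starProjection hTP
      (rankOneSum_comp_starProjection g _) ?_⟩
  rintro _ ⟨l, rfl⟩
  rw [rankOneSum_apply_self, Matrix.mul_assoc, Matrix.nonsing_inv_mul _ hG, Matrix.mul_one,
    ← hb l]
  rfl

variable {ns : ℕ} (v : Fin ns → H) (Y : Matrix (Fin ns) (Fin n) ℝ)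

noncomputable def fitError (S : H →L[ℝ] H) : ℝ :=
  ∑ k, ∑ l, (Y k l - ⟪v k, S (g l)⟫_ℝ) ^ 2

lemma fitError_nonneg (S : H →L[ℝ] H) : 0 ≤ fitError g v Y S := by
  unfold fitError
  positivity

lemma fitError_comp_starProjection (S : H →L[ℝ] H) :
    fitError g v Y (S ∘L (span ℝ (range g)).starProjection) = fitError g v Y S := by
  simp only [fitError, ContinuousLinearMap.comp_apply,
    starProjection_eq_self_iff.mpr (subset_span (mem_range_self _))]

lemma fitError_rankOneSum {P : Matrix (Fin ns) (Fin n) ℝ} (hP : ∀ k l, P k l = ⟪v k, g l⟫_ℝ)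
    (C : Matrix (Fin n) (Fin n) ℝ) :
    fitError g v Y (rankOneSum g C) = ∑ k, ∑ l, (Y - P * (C * gram g)) k l ^ 2 := by
  simp only [fitError, rankOneSum_apply_self, inner_sum, real_inner_smul_right, Matrix.sub_apply,
    Matrix.mul_apply (M := P), hP, mul_comm]

def invariantOps (𝒢 : Submodule ℝ H) : Set (H →L[ℝ] H) :=
  {S | ∀ x ∈ 𝒢, S x ∈ 𝒢}

noncomputable def regularizedError (lam : ℝ) (S : H →L[ℝ] H) : ℝ :=
  fitError g v Y S + lam * ‖S‖ ^ 2

variable {g v Y}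

lemma mul_norm_sq_le_fitError_zero_of_isMinOn {lam : ℝ} {T : H →L[ℝ] H}
    (hmin : IsMinOn (regularizedError g v Y lam) (invariantOps (span ℝ (range g))) T) :
    lam * ‖T‖ ^ 2 ≤ fitError g v Y 0 := by
  have h0 := isMinOn_iff.1 hmin 0 fun _ _ => zero_mem _
  simp only [regularizedError, norm_zero] at h0
  nlinarith [fitError_nonneg g v Y T]

lemma exists_eq_rankOneSum_of_isMinOn (hG : IsUnit (gram g).det) {lam : ℝ} (hlam : 0 ≤ lam)
    {T : H →L[ℝ] H} (hT : T ∈ invariantOps (span ℝ (range g)))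
    (hmin : IsMinOn (regularizedError g v Y lam) (invariantOps (span ℝ (range g))) T)
    (huniq : ∀ S ∈ invariantOps (span ℝ (range g)),
      IsMinOn (regularizedError g v Y lam) (invariantOps (span ℝ (range g))) S → S = T) :
    ∃ C, T = rankOneSum g C := by
  refine exists_eq_rankOneSum g hG (fun l => hT _ (subset_span (mem_range_self l)))
    (huniq _ (T.comp_starProjection_apply_mem hT) (isMinOn_iff.2 fun S hS => ?_))
  refine (isMinOn_iff.1 hmin S hS).trans' ?_
  rw [regularizedError, regularizedError, fitError_comp_starProjection]
  gcongr
  exact T.norm_comp_starProjection_le _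

lemma sum_sum_sq_mul_sub_le_of_isMinOn {P : Matrix (Fin ns) (Fin n) ℝ}
    (hP : ∀ k l, P k l = ⟪v k, g l⟫_ℝ) (hG : IsUnit (gram g).det) {M : Matrix (Fin n) (Fin n) ℝ}
    (hM : Pᵀ * (Y - P * M) = 0) {lam : ℝ} (hlam : 0 ≤ lam) {C : Matrix (Fin n) (Fin n) ℝ}
    (hmin : IsMinOn (regularizedError g v Y lam) (invariantOps (span ℝ (range g)))
      (rankOneSum g C)) :
    ∑ k, ∑ l, (P * (C * gram g - M)) k l ^ 2 ≤ lam * ‖rankOneSum g (M * (gram g)⁻¹)‖ ^ 2 := by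
  have h := isMinOn_iff.1 hmin _ fun x _ => rankOneSum_apply_mem g (M * (gram g)⁻¹) x
  rw [regularizedError, regularizedError, fitError_rankOneSum g v Y hP,
    fitError_rankOneSum g v Y hP, Matrix.mul_assoc, Matrix.nonsing_inv_mul _ hG, Matrix.mul_one,
    Matrix.sum_sum_sq_sub_mul_eq hM] at h
  nlinarith [mul_nonneg hlam (sq_nonneg ‖rankOneSum g C‖)]

end Operators

theorem statement7_general {H : Type*} [NormedAddCommGroup H] [InnerProductSpace ℝ H]
    {ns ng : ℕ} (v : Fin ns → H) (g : Fin ng → H)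
    (hG : IsUnit (gram g).det)
    (P : Matrix (Fin ns) (Fin ng) ℝ) (hP : ∀ k l, P k l = ⟪v k, g l⟫_ℝ)
    (hPrank : P.rank = ng)
    (Y : Matrix (Fin ns) (Fin ng) ℝ)
    (Mstar : Matrix (Fin ng) (Fin ng) ℝ) (hMstar : Mstar = (Pᵀ * P)⁻¹ * Pᵀ * Y)
    (KhatU : H →L[ℝ] H)
    (hKhatU : KhatU = ∑ j, ∑ l, (Mstar * (gram g)⁻¹) j l • rankOne (g j) (g l))
    (LG : Set (H →L[ℝ] H))
    (hLG : LG = {S : H →L[ℝ] H | ∀ x ∈ Submodule.span ℝ (Set.range g),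
        S x ∈ Submodule.span ℝ (Set.range g)})
    (K : ℝ → (H →L[ℝ] H))
    -- for every `λ > 0`, `K λ` is the unique solution of the regularized problem over `L_𝒢`
    (hKmem : ∀ lam > (0 : ℝ), K lam ∈ LG)
    (hKmin : ∀ lam > (0 : ℝ), ∀ S ∈ LG,
      (∑ k, ∑ l, (Y k l - ⟪v k, (K lam) (g l)⟫_ℝ) ^ 2) + lam * ‖K lam‖ ^ 2 ≤
      (∑ k, ∑ l, (Y k l - ⟪v k, S (g l)⟫_ℝ) ^ 2) + lam * ‖S‖ ^ 2)
    (hKuniq : ∀ lam > (0 : ℝ), ∀ S ∈ LG,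
      (∀ S' ∈ LG,
        (∑ k, ∑ l, (Y k l - ⟪v k, S (g l)⟫_ℝ) ^ 2) + lam * ‖S‖ ^ 2 ≤
        (∑ k, ∑ l, (Y k l - ⟪v k, S' (g l)⟫_ℝ) ^ 2) + lam * ‖S'‖ ^ 2) →
      S = K lam) :
    Filter.Tendsto K (𝓝[>] (0 : ℝ)) (𝓝 KhatU) ∧
    Filter.Tendsto K Filter.atTop (𝓝 (0 : H →L[ℝ] H)) := by
  change KhatU = rankOneSum g _ at hKhatU
  subst hLG hKhatU
  replace hKmin : ∀ lam > (0 : ℝ), IsMinOn (regularizedError g v Y lam)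
      (invariantOps (span ℝ (range g))) (K lam) := fun lam hlam => isMinOn_iff.2 (hKmin lam hlam)
  have hPtP := P.isUnit_det_transpose_mul_self (by simpa using hPrank)
  have hnormal := Matrix.transpose_mul_sub_mul_nonsing_inv_mul_eq_zero hPtP Y
  rw [← hMstar] at hnormal
  refine ⟨?_, tendsto_atTop_zero_of_mul_norm_sq_le fun lam hlam =>
    mul_norm_sq_le_fitError_zero_of_isMinOn (hKmin lam hlam)⟩
  choose! C hC using fun lam (hlam : 0 < lam) => exists_eq_rankOneSum_of_isMinOn hG hlam.le
    (hKmem lam hlam) (hKmin lam hlam) fun S hS hSmin => hKuniq lam hlam S hS (isMinOn_iff.1 hSmin)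
  have hB := Matrix.tendsto_nhdsGT_zero_of_sum_sum_sq_mul_sub_le hPtP fun lam hlam =>
    sum_sum_sq_mul_sub_le_of_isMinOn hP hG hnormal hlam.le (hC lam hlam ▸ hKmin lam hlam)
  refine (((continuous_rankOneSum g).tendsto _).comp (hB.mul_const (gram g)⁻¹)).congr' ?_
  filter_upwards [self_mem_nhdsWithin] with lam hlam
  simp [hC lam hlam, Matrix.mul_assoc, Matrix.mul_nonsing_inv _ hG]

/-- **Limits of the Tikhonov-regularized solutions over `L_𝒢`.**  Under the EDMD
setting (`g` linearly independent, `P = [⟪v_k, g_l⟫]` of full column rank, `G`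
invertible, `K̂_U = Σ_{j,l}[M* G⁻¹]_{jl} g_j ⊗ g_l` with `M* = (PᵀP)⁻¹PᵀY`), if for
every `λ > 0` the operator `K λ` is the unique solution of
`min_{K ∈ L_𝒢} E(K) + λ‖K‖²`, then `K λ → K̂_U` in the operator norm as `λ → 0⁺`
and `K λ → 0` in the operator norm as `λ → ∞`. -/
theorem statement7 {H : Type*} [NormedAddCommGroup H] [InnerProductSpace ℝ H]
    [CompleteSpace H] {ns ng : ℕ} (v : Fin ns → H) (g : Fin ng → H)
    (hg : LinearIndependent ℝ g) (hG : IsUnit (gram g).det)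
    (P : Matrix (Fin ns) (Fin ng) ℝ) (hP : ∀ k l, P k l = ⟪v k, g l⟫_ℝ)
    (hPrank : P.rank = ng)
    (Y : Matrix (Fin ns) (Fin ng) ℝ)
    (Mstar : Matrix (Fin ng) (Fin ng) ℝ) (hMstar : Mstar = (Pᵀ * P)⁻¹ * Pᵀ * Y)
    (KhatU : H →L[ℝ] H)
    (hKhatU : KhatU = ∑ j, ∑ l, (Mstar * (gram g)⁻¹) j l • rankOne (g j) (g l))
    (LG : Set (H →L[ℝ] H))
    (hLG : LG = {S : H →L[ℝ] H | ∀ x ∈ Submodule.span ℝ (Set.range g),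
        S x ∈ Submodule.span ℝ (Set.range g)})
    (K : ℝ → (H →L[ℝ] H))
    -- for every `λ > 0`, `K λ` is the unique solution of the regularized problem over `L_𝒢`
    (hKmem : ∀ lam > (0 : ℝ), K lam ∈ LG)
    (hKmin : ∀ lam > (0 : ℝ), ∀ S ∈ LG,
      (∑ k, ∑ l, (Y k l - ⟪v k, (K lam) (g l)⟫_ℝ) ^ 2) + lam * ‖K lam‖ ^ 2 ≤
      (∑ k, ∑ l, (Y k l - ⟪v k, S (g l)⟫_ℝ) ^ 2) + lam * ‖S‖ ^ 2)
    (hKuniq : ∀ lam > (0 : ℝ), ∀ S ∈ LG,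
      (∀ S' ∈ LG,
        (∑ k, ∑ l, (Y k l - ⟪v k, S (g l)⟫_ℝ) ^ 2) + lam * ‖S‖ ^ 2 ≤
        (∑ k, ∑ l, (Y k l - ⟪v k, S' (g l)⟫_ℝ) ^ 2) + lam * ‖S'‖ ^ 2) →
      S = K lam) :
    Filter.Tendsto K (𝓝[>] (0 : ℝ)) (𝓝 KhatU) ∧
    Filter.Tendsto K Filter.atTop (𝓝 (0 : H →L[ℝ] H)) :=
  statement7_general v g hG P hP hPrank Y Mstar hMstar KhatU hKhatU LG hLG K hKmem hKmin hKuniq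
end

section
/- Let H be a real Hilbert space with a Hilbert (orthonormal) basis (b_i), z₁,…,z_{n_z}, g₁,…,g_{n_g} ∈ H with Gram matrices Z and G, and A = [a_{kl}] ∈ ℝ^{n_z×n_g}. Then the finite-rank operator K̂ = Σ_{k,l} a_{kl} z_k ⊗ g_l satisfies Σ'_i ‖K̂ b_i‖² = ‖Z^{1/2} A G^{1/2}‖_F², i.e., the Hilbert–Schmidt norm of K̂ equals the matrix Frobenius norm of Z^{1/2} A G^{1/2}. -/
/-!
Writing `u_k = Σ_l a_{kl} g_l`, the operator is `K̂ w = Σ_k ⟪u_k, w⟫ z_k`, so Parseval's identity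
gives `Σ'_i ‖K̂ b_i‖² = Σ_{k,k'} ⟪z_k, z_{k'}⟫ ⟪u_k, u_{k'}⟫ = tr (Z A G Aᵀ)`, the Gram matrix of
the `u_k` being `A G Aᵀ`. Since the square roots are symmetric,
`‖Z^{1/2} A G^{1/2}‖_F² = tr (Z^{1/2} A G Aᵀ Z^{1/2}) = tr (Z A G Aᵀ)` as well.
-/

open scoped InnerProductSpace ENNReal NNReal

/-- Squared Frobenius norm of a real matrix. -/
noncomputable def frobSq {n m : ℕ} (M : Matrix (Fin n) (Fin m) ℝ) : ℝ :=
  ∑ i, ∑ j, (M i j) ^ 2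

open scoped Matrix

lemma frobSq_eq_trace_mul_transpose {n m : ℕ} (M : Matrix (Fin n) (Fin m) ℝ) :
    frobSq M = (M * Mᵀ).trace := by
  simp [frobSq, Matrix.trace, Matrix.mul_apply, sq]

lemma frobSq_mul_mul_of_isSymm {n m : ℕ} {S : Matrix (Fin n) (Fin n) ℝ}
    {T : Matrix (Fin m) (Fin m) ℝ} (hS : S.IsSymm) (hT : T.IsSymm) (A : Matrix (Fin n) (Fin m) ℝ) :
    frobSq (S * A * T) = (S * S * A * (T * T) * Aᵀ).trace := by
  rw [frobSq_eq_trace_mul_transpose, Matrix.transpose_mul, Matrix.transpose_mul, hS.eq, hT.eq,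
    show S * S * A * (T * T) * Aᵀ = S * (S * A * (T * T) * Aᵀ) by simp only [Matrix.mul_assoc],
    Matrix.trace_mul_comm S]
  simp only [Matrix.mul_assoc]

section Hilbert

variable {H : Type*} [NormedAddCommGroup H] [InnerProductSpace ℝ H]

lemma sum_smul_rankOne_apply {m n : ℕ} (A : Matrix (Fin m) (Fin n) ℝ) (z : Fin m → H)
    (g : Fin n → H) (w : H) :
    (∑ k, ∑ l, A k l • rankOne (z k) (g l)) w = ∑ k, ⟪∑ l, A k l • g l, w⟫_ℝ • z k := by
  simp [rankOne, sum_inner, real_inner_smul_left, Finset.sum_smul, mul_smul]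

lemma gram_sum_smul {m n : ℕ} (A : Matrix (Fin m) (Fin n) ℝ) (g : Fin n → H) :
    gram (fun k => ∑ l, A k l • g l) = A * gram g * Aᵀ := by
  ext k k'
  simp only [gram, Matrix.of_apply, sum_inner, inner_sum, real_inner_smul_left,
    real_inner_smul_right, Matrix.mul_apply, Matrix.transpose_apply, Finset.sum_mul]
  exact Fintype.sum_congr _ _ fun j => Fintype.sum_congr _ _ fun i => by ring

lemma norm_sq_sum_smul {n : ℕ} (c : Fin n → ℝ) (z : Fin n → H) :
    ‖∑ k, c k • z k‖ ^ 2 = ∑ k, ∑ k', c k * c k' * gram z k k' := by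
  rw [← real_inner_self_eq_norm_sq, sum_inner]
  simp [inner_sum, real_inner_smul_left, real_inner_smul_right, gram, mul_assoc, mul_left_comm]

lemma HilbertBasis.hasSum_norm_sq_sum_inner_smul {ι : Type*} (b : HilbertBasis ι ℝ H) {n : ℕ}
    (u z : Fin n → H) :
    HasSum (fun i => ‖∑ k, ⟪u k, b i⟫_ℝ • z k‖ ^ 2) (gram z * gram u).trace := by
  have hterm (k k' : Fin n) : HasSum (fun i => ⟪u k, b i⟫_ℝ * ⟪u k', b i⟫_ℝ * gram z k k')
      (⟪u k, u k'⟫_ℝ * gram z k k') := by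
    simpa only [real_inner_comm (u k')] using
      (b.hasSum_inner_mul_inner (u k) (u k')).mul_right (gram z k k')
  simp only [norm_sq_sum_smul]
  convert hasSum_sum fun k _ => hasSum_sum fun k' _ => hterm k k'
  simp [Matrix.trace, Matrix.mul_apply, gram, real_inner_comm, mul_comm]

end Hilbert

lemma tsum_nnnorm_sq_eq_ofReal {ι E : Type*} [SeminormedAddCommGroup E] {f : ι → E} {s : ℝ}
    (h : HasSum (fun i => ‖f i‖ ^ 2) s) :
    ∑' i, (‖f i‖₊ : ℝ≥0∞) ^ 2 = ENNReal.ofReal s := by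
  rw [← h.tsum_eq, ENNReal.ofReal_tsum_of_nonneg (fun _ => by positivity) h.summable]
  congr 1 with i
  rw [ENNReal.ofReal_pow (norm_nonneg _), ofReal_norm, enorm_eq_nnnorm]

/-- The squared Hilbert–Schmidt norm `Σ'_i ‖K̂ b_i‖²` of the finite-rank operator
`K̂ = Σ_{k,l} a_{kl} z_k ⊗ g_l` equals the squared matrix Frobenius norm of
`Z^{1/2} A G^{1/2}`, where `Zh = Z^{1/2}`, `Gh = G^{1/2}` are the PSD square
roots of the Gram matrices of `(z_k)` and `(g_l)`. -/
theorem statement12 {H : Type*} [NormedAddCommGroup H] [InnerProductSpace ℝ H]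
    {ι : Type*} (b : HilbertBasis ι ℝ H)
    {nz ng : ℕ} (z : Fin nz → H) (g : Fin ng → H)
    (A : Matrix (Fin nz) (Fin ng) ℝ)
    (Zh : Matrix (Fin nz) (Fin nz) ℝ) (hZh : Zh.PosSemidef) (hZh2 : Zh * Zh = gram z)
    (Gh : Matrix (Fin ng) (Fin ng) ℝ) (hGh : Gh.PosSemidef) (hGh2 : Gh * Gh = gram g) :
    (∑' i, ((‖(∑ k, ∑ l, A k l • rankOne (z k) (g l)) (b i)‖₊ : ℝ≥0∞)) ^ 2) =
      ENNReal.ofReal (frobSq (Zh * A * Gh)) := by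
  simp_rw [sum_smul_rankOne_apply]
  rw [tsum_nnnorm_sq_eq_ofReal (b.hasSum_norm_sq_sum_inner_smul _ z), gram_sum_smul,
    frobSq_mul_mul_of_isSymm (Matrix.isHermitian_iff_isSymm.mp hZh.isHermitian)
      (Matrix.isHermitian_iff_isSymm.mp hGh.isHermitian), hZh2, hGh2]
  simp only [Matrix.mul_assoc]
end

section
/- Let H be a real Hilbert space, z₁,…,z_{n_z}, g₁,…,g_{n_g} ∈ H with Gram matrices Z and G, and A = [a_{kl}] ∈ ℝ^{n_z×n_g}. Then the finite-rank operator K̂ = Σ_{k,l} a_{kl} z_k ⊗ g_l satisfies rank(K̂) = rank(Z A G), where rank(K̂) is the dimension of the range of K̂ and rank(Z A G) is the matrix rank. -/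
open scoped InnerProductSpace

/-!
Write `S_u c = ∑ cᵢ uᵢ` for the synthesis map of a finite family and `S_u* w = (⟪uᵢ, w⟫)ᵢ` for
its analysis map, so that `S_u* S_u` is the Gram matrix of `u` and `K̂ = S_z A S_g*`.
Since `S_g*` has the same range as `G` (orthogonal projection onto the span of the `gⱼ`),
`K̂` has the range of `S_z A G`; since `S_z` has the same kernel as `Z` (`⟪S_z c, S_z c⟫ = cᵀ Z c`),
`S_z A G` and `Z A G` have the same kernel, hence isomorphic ranges.
-/

open LinearMap
open scoped Matrix

universe v w

theorem LinearMap.lift_rank_range_eq_of_ker_eq {R M : Type*} {N : Type v} {N' : Type w} [Ring R]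
    [AddCommGroup M] [Module R M] [AddCommGroup N] [Module R N] [AddCommGroup N'] [Module R N']
    {f : M →ₗ[R] N} {f' : M →ₗ[R] N'} (h : ker f = ker f') :
    Cardinal.lift.{w} (Module.rank R (range f)) = Cardinal.lift.{v} (Module.rank R (range f')) :=
  (f.quotKerEquivRange.symm ≪≫ₗ Submodule.quotEquivOfEq _ _ h ≪≫ₗ
    f'.quotKerEquivRange).lift_rank_eq

section FiniteFamily

variable {𝕜 E ι : Type*} [RCLike 𝕜] [NormedAddCommGroup E] [InnerProductSpace 𝕜 E]

variable (𝕜) in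
noncomputable def analysisMap (u : ι → E) : E →ₗ[𝕜] ι → 𝕜 :=
  LinearMap.pi fun i => innerₛₗ 𝕜 (u i)

@[simp] lemma analysisMap_apply (u : ι → E) (w : E) (i : ι) :
    analysisMap 𝕜 u w i = ⟪u i, w⟫_𝕜 := rfl

variable [Fintype ι]

lemma analysisMap_comp_linearCombination (u : ι → E) :
    analysisMap 𝕜 u ∘ₗ Fintype.linearCombination 𝕜 u = (Matrix.gram 𝕜 u).mulVecLin := by
  ext c i
  simp [Matrix.mulVec, dotProduct, Fintype.linearCombination_apply, inner_sum, inner_smul_right,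
    Matrix.gram_apply, mul_comm]

lemma ker_linearCombination_eq_ker_gram (u : ι → E) :
    ker (Fintype.linearCombination 𝕜 u) = ker (Matrix.gram 𝕜 u).mulVecLin := by
  ext c
  simp only [mem_ker, Matrix.mulVecLin_apply]
  constructor
  · intro hc
    rw [← Matrix.mulVecLin_apply, ← analysisMap_comp_linearCombination, LinearMap.comp_apply, hc,
      map_zero]
  · intro hc
    have : star c ⬝ᵥ Matrix.gram 𝕜 u *ᵥ c = 0 := by rw [hc, dotProduct_zero]
    rwa [Matrix.star_dotProduct_gram_mulVec, inner_self_eq_zero,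
      ← Fintype.linearCombination_apply] at this

lemma range_analysisMap_eq_range_gram (u : ι → E) :
    range (analysisMap 𝕜 u) = range (Matrix.gram 𝕜 u).mulVecLin := by
  refine le_antisymm ?_ ?_
  · rintro _ ⟨w, rfl⟩
    have : FiniteDimensional 𝕜 (Submodule.span 𝕜 (Set.range u)) :=
      .span_of_finite 𝕜 (Set.finite_range u)
    obtain ⟨y, hy, q, hq, rfl⟩ :=
      (Submodule.span 𝕜 (Set.range u)).exists_add_mem_mem_orthogonal w
    obtain ⟨c, rfl⟩ := (Submodule.mem_span_range_iff_exists_fun 𝕜).mp hy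
    have hq0 : analysisMap 𝕜 u q = 0 := funext fun i => hq _ (Submodule.subset_span ⟨i, rfl⟩)
    refine ⟨c, ?_⟩
    rw [map_add, hq0, add_zero, ← analysisMap_comp_linearCombination, LinearMap.comp_apply,
      Fintype.linearCombination_apply]
  · rw [← analysisMap_comp_linearCombination]
    exact range_comp_le_range _ _

end FiniteFamily

lemma gram_eq_matrixGram {H : Type*} [NormedAddCommGroup H] [InnerProductSpace ℝ H] {n : ℕ}
    (u : Fin n → H) : gram u = Matrix.gram ℝ u := rfl

lemma sum_smul_rankOne_eq {H : Type*} [NormedAddCommGroup H] [InnerProductSpace ℝ H]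
    {ι κ : Type*} [Fintype ι] [Fintype κ] (z : ι → H) (g : κ → H) (A : Matrix ι κ ℝ) :
    ∑ k, ∑ l, A k l • (rankOne (z k) (g l) : H →ₗ[ℝ] H) =
      Fintype.linearCombination ℝ z ∘ₗ A.mulVecLin ∘ₗ analysisMap ℝ g := by
  ext w
  simp [rankOne, Fintype.linearCombination_apply, Matrix.mulVec, dotProduct, Finset.sum_smul,
    smul_smul]

/-- The rank (dimension of the range) of the finite-rank operator
`K̂ = Σ_{k,l} a_{kl} z_k ⊗ g_l` equals the rank of the matrix `Z A G`, where `Z`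
and `G` are the Gram matrices of `(z_k)` and `(g_l)`. -/
theorem statement15 {H : Type*} [NormedAddCommGroup H] [InnerProductSpace ℝ H]
    {nz ng : ℕ} (z : Fin nz → H) (g : Fin ng → H)
    (A : Matrix (Fin nz) (Fin ng) ℝ) :
    Module.rank ℝ
        (LinearMap.range ((∑ k, ∑ l, A k l • rankOne (z k) (g l)) : H →ₗ[ℝ] H)) =
      ((gram z * A * gram g).rank : Cardinal) := by
  rw [sum_smul_rankOne_eq, gram_eq_matrixGram, gram_eq_matrixGram]
  set S := Fintype.linearCombination ℝ z
  have hrange : range (S ∘ₗ A.mulVecLin ∘ₗ analysisMap ℝ g) =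
      range (S ∘ₗ A.mulVecLin ∘ₗ (Matrix.gram ℝ g).mulVecLin) := by
    rw [range_comp, range_comp, range_comp, range_comp, range_analysisMap_eq_range_gram]
  have hker : ker (S ∘ₗ A.mulVecLin ∘ₗ (Matrix.gram ℝ g).mulVecLin) =
      ker (Matrix.gram ℝ z * A * Matrix.gram ℝ g).mulVecLin := by
    rw [Matrix.mulVecLin_mul, Matrix.mulVecLin_mul, comp_assoc, ker_comp, ker_comp,
      ker_linearCombination_eq_ker_gram]
  rw [hrange]
  simpa [Matrix.rank, ← Module.finrank_eq_rank] using lift_rank_range_eq_of_ker_eq hker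
end

section
/- Let X ⊆ ℝ^{n_x}, f : X → X, and x_eq ∈ X an equilibrium of the dynamics x_{k+1} = f(x_k). Let H be a real Hilbert space equipped with a linear map realizing each g ∈ H as a real-valued function on X (write g(x)), and suppose there is a constant C ≥ 0 with |g(x)| ≤ C‖g‖ for all x ∈ X and g ∈ H (in the RKHS case C = sup_{x∈X} k(x,x)^{1/2} < ∞). Let K be a bounded linear operator on H with (K g)(x) = g(f(x)) for all g ∈ H and x ∈ X (the Koopman operator). Assume the separation property: for each coordinate j ∈ {1,…,n_x} there exist h_j ∈ H and positive scalars L_j, α_j with |h_j(x)| ≥ L_j|x_j − x_{eq,j}|^{α_j} for all x ∈ X. If ‖K‖ ≤ 1 − ε for some ε ∈ (0,1), then for every trajectory x_{n+1} = f(x_n), x₀ ∈ X, and every coordinate j, |x_{n,j} − x_{eq,j}| ≤ (1 − ε)^{n/α} · max_{1≤j≤n_x} (C‖h_j‖/L_j)^{1/α_j}, where α = max{α₁,…,α_{n_x}}; in particular x_n → x_eq uniformly in the initial condition, with exponential rate, so x_eq is a globally stable equilibrium. -/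
open scoped InnerProductSpace

/-- **Stability of an equilibrium via a norm bound on the Koopman operator.**
Let `X ⊆ ℝ^{n_x}`, `f : X → X`, and `x_eq ∈ X` an equilibrium of
`x_{k+1} = f(x_k)`.  Let `H` be a real Hilbert space of observables, realized as
functions on `X` via a linear evaluation map `ev` satisfying the uniform bound
`|ev g x| ≤ C‖g‖`, and let `K` be the Koopman operator (`(K g)(x) = g(f x)`).
Assume the separation property: for each coordinate `j` there are `h_j ∈ H`,
`L_j, α_j > 0` with `L_j|x_j − x_eq_j|^{α_j} ≤ |h_j(x)|` on `X`.  If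
`‖K‖ ≤ 1 − ε` with `ε ∈ (0,1)`, then along every trajectory,
`|x_{n,j} − x_eq_j| ≤ (1−ε)^{n/α} · sup_j (C‖h_j‖/L_j)^{1/α_j}` for
`α = sup_j α_j`; in particular `x_n → x_eq`. -/
theorem statement16 {H : Type*} [NormedAddCommGroup H] [InnerProductSpace ℝ H]
    {nx : ℕ} (X : Set (Fin nx → ℝ)) (f : (Fin nx → ℝ) → (Fin nx → ℝ))
    (hfX : ∀ x ∈ X, f x ∈ X)
    (xeq : Fin nx → ℝ) (hxeqmem : xeq ∈ X) (hxeq : f xeq = xeq)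
    (ev : H →ₗ[ℝ] ((Fin nx → ℝ) → ℝ))
    (C : ℝ) (hC : 0 ≤ C)
    (hbound : ∀ x ∈ X, ∀ gobs : H, |ev gobs x| ≤ C * ‖gobs‖)
    (K : H →L[ℝ] H)
    (hKoopman : ∀ gobs : H, ∀ x ∈ X, ev (K gobs) x = ev gobs (f x))
    (h : Fin nx → H) (L α : Fin nx → ℝ)
    (hL : ∀ j, 0 < L j) (hα : ∀ j, 0 < α j)
    (hsep : ∀ x ∈ X, ∀ j, L j * |x j - xeq j| ^ (α j) ≤ |ev (h j) x|)
    (ε : ℝ) (hε0 : 0 < ε) (hε1 : ε < 1) (hKnorm : ‖K‖ ≤ 1 - ε)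
    (x : ℕ → (Fin nx → ℝ)) (hx0 : x 0 ∈ X) (hxstep : ∀ n, x (n + 1) = f (x n)) :
    (∀ (n : ℕ) (j : Fin nx),
      |x n j - xeq j| ≤
        (1 - ε) ^ ((n : ℝ) / ⨆ j', α j') *
          ⨆ j', (C * ‖h j'‖ / L j') ^ (1 / α j')) ∧
    Filter.Tendsto x Filter.atTop (nhds xeq) := by
  have hr0 : (0:ℝ) < 1 - ε := by linarith
  have hmem : ∀ n, x n ∈ X := by
    intro n
    induction n with
    | zero => exact hx0
    | succ n ih => rw [hxstep]; exact hfX _ ih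
  have hiter : ∀ (g : H) (n : ℕ), ev g (x n) = ev ((K ^ n) g) (x 0) := by
    intro g n
    induction n generalizing g with
    | zero => simp
    | succ n ih =>
      rw [hxstep, ← hKoopman g (x n) (hmem n), ih (K g), pow_succ]
      rfl
  have hKn : ∀ (g : H) (n : ℕ), ‖(K ^ n) g‖ ≤ (1 - ε) ^ n * ‖g‖ := by
    intro g n
    induction n with
    | zero => simp
    | succ n ih =>
      have h1 : (K ^ (n + 1)) g = K ((K ^ n) g) := by rw [pow_succ']; rfl
      rw [h1]
      calc ‖K ((K ^ n) g)‖ ≤ ‖K‖ * ‖(K ^ n) g‖ := K.le_opNorm _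
        _ ≤ (1 - ε) * ((1 - ε) ^ n * ‖g‖) :=
          mul_le_mul hKnorm ih (norm_nonneg _) (by positivity)
        _ = (1 - ε) ^ (n + 1) * ‖g‖ := by ring
  have hbdd : BddAbove (Set.range α) := (Set.finite_range α).bddAbove
  have hbdd2 : BddAbove (Set.range fun j' => (C * ‖h j'‖ / L j') ^ (1 / α j')) :=
    (Set.finite_range _).bddAbove
  have key : ∀ (n : ℕ) (j : Fin nx),
      |x n j - xeq j| ≤
        (1 - ε) ^ ((n : ℝ) / ⨆ j', α j') *
          ⨆ j', (C * ‖h j'‖ / L j') ^ (1 / α j') := by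
    intro n j
    have hAj : α j ≤ ⨆ j', α j' := le_ciSup hbdd j
    have hA0 : (0:ℝ) < ⨆ j', α j' := lt_of_lt_of_le (hα j) hAj
    have hcj0 : (0:ℝ) ≤ C * ‖h j‖ / L j := div_nonneg (mul_nonneg hC (norm_nonneg _)) (hL j).le
    have h1 : L j * |x n j - xeq j| ^ (α j) ≤ C * ((1 - ε) ^ n * ‖h j‖) := by
      calc L j * |x n j - xeq j| ^ (α j) ≤ |ev (h j) (x n)| := hsep _ (hmem n) j
        _ = |ev ((K ^ n) (h j)) (x 0)| := by rw [hiter]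
        _ ≤ C * ‖(K ^ n) (h j)‖ := hbound _ hx0 _
        _ ≤ C * ((1 - ε) ^ n * ‖h j‖) := mul_le_mul_of_nonneg_left (hKn _ n) hC
    have h2 : |x n j - xeq j| ^ (α j) ≤ (1 - ε) ^ n * (C * ‖h j‖ / L j) := by
      rw [mul_div_assoc', le_div_iff₀ (hL j)]
      nlinarith [h1]
    have h3 : |x n j - xeq j| ≤
        ((1 - ε) ^ n * (C * ‖h j‖ / L j)) ^ (α j)⁻¹ := by
      have h3' := Real.rpow_le_rpow (Real.rpow_nonneg (abs_nonneg _) _) h2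
        (le_of_lt (inv_pos.mpr (hα j)))
      rwa [Real.rpow_rpow_inv (abs_nonneg _) (ne_of_gt (hα j))] at h3'
    have h4 : ((1 - ε) ^ n * (C * ‖h j‖ / L j)) ^ (α j)⁻¹ =
        (1 - ε) ^ ((n : ℝ) / α j) * (C * ‖h j‖ / L j) ^ (α j)⁻¹ := by
      rw [Real.mul_rpow (by positivity) hcj0,
        ← Real.rpow_natCast (1 - ε) n, ← Real.rpow_mul hr0.le,
        div_eq_mul_inv ((n:ℝ)) (α j)]
    have h5 : (1 - ε) ^ ((n : ℝ) / α j) ≤ (1 - ε) ^ ((n : ℝ) / ⨆ j', α j') :=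
      Real.rpow_le_rpow_of_exponent_ge hr0 (by linarith)
        (div_le_div_of_nonneg_left (Nat.cast_nonneg n) (hα j) hAj)
    have h6 : (C * ‖h j‖ / L j) ^ (α j)⁻¹ ≤
        ⨆ j', (C * ‖h j'‖ / L j') ^ (1 / α j') := by
      rw [show (α j)⁻¹ = 1 / α j from (one_div _).symm]
      exact le_ciSup hbdd2 j
    calc |x n j - xeq j|
        ≤ (1 - ε) ^ ((n : ℝ) / α j) * (C * ‖h j‖ / L j) ^ (α j)⁻¹ := by
          rw [← h4]; exact h3
      _ ≤ (1 - ε) ^ ((n : ℝ) / ⨆ j', α j') *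
          ⨆ j', (C * ‖h j'‖ / L j') ^ (1 / α j') :=
          mul_le_mul h5 h6 (Real.rpow_nonneg hcj0 _) (Real.rpow_nonneg hr0.le _)
  refine ⟨key, ?_⟩
  rcases isEmpty_or_nonempty (Fin nx) with hemp | hne
  · have hx : x = fun _ => xeq := funext fun n => Subsingleton.elim _ _
    rw [hx]
    exact tendsto_const_nhds
  · obtain ⟨j0⟩ := hne
    have hA0 : (0:ℝ) < ⨆ j', α j' := lt_of_lt_of_le (hα j0) (le_ciSup hbdd j0)
    have hM0 : (0:ℝ) ≤ ⨆ j', (C * ‖h j'‖ / L j') ^ (1 / α j') :=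
      Real.iSup_nonneg fun j' => Real.rpow_nonneg (div_nonneg (mul_nonneg hC (norm_nonneg _)) (hL _).le) _
    set c := (1 - ε) ^ (⨆ j', α j')⁻¹ with hc
    have hc0 : 0 ≤ c := Real.rpow_nonneg hr0.le _
    have hc1 : c < 1 := Real.rpow_lt_one hr0.le (by linarith) (inv_pos.mpr hA0)
    have hrw : ∀ n : ℕ, (1 - ε) ^ ((n : ℝ) / ⨆ j', α j') = c ^ n := by
      intro n
      rw [hc, div_eq_mul_inv, mul_comm, Real.rpow_mul hr0.le, Real.rpow_natCast]
    rw [tendsto_pi_nhds]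
    intro j
    have hlim : Filter.Tendsto
        (fun n : ℕ => c ^ n * ⨆ j', (C * ‖h j'‖ / L j') ^ (1 / α j'))
        Filter.atTop (nhds 0) := by
      simpa using (tendsto_pow_atTop_nhds_zero_of_lt_one hc0 hc1).mul_const
        (⨆ j', (C * ‖h j'‖ / L j') ^ (1 / α j'))
    have hsq : Filter.Tendsto (fun n => x n j - xeq j) Filter.atTop (nhds 0) :=
      squeeze_zero_norm (fun n => by
        simpa [Real.norm_eq_abs, hrw n] using key n j) hlim
    have := hsq.add_const (xeq j)
    simpa using this
end
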